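/- arXiv:1905.06092 — 11 statements merged into one kernel-verified Lean document; each statement's English description precedes it below -/
import Mathlib

section
/- Let u_L, u_R ∈ (-1, 1) with u_L ≠ u_R, and let W_L = 1/√(1-u_L²), W_R = 1/√(1-u_R²). Then the quantity ((W_L+W_R)/2)² + ((u_L+u_R)/2 · (W_L+W_R)/2 - (u_L W_L + u_R W_R)/2) · (W_L - W_R)/(u_L - u_R) equals W_L · W_R, and in particular is strictly positive. -/
/-! The cross term `⟨u⟩⟨W⟩ - ⟨uW⟩` equals `-(u_L - u_R)(W_L - W_R)/4`, so multiplying it by the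
slope `(W_L - W_R)/(u_L - u_R)` cancels `u_L - u_R` and leaves `⟨W⟩² - ((W_L - W_R)/2)²`, which is
`W_L W_R` by the difference of squares. The identity is purely algebraic; positivity comes from
that of the Lorentz factors. -/

theorem mean_sq_add_cov_mul_slope_eq_mul (uL uR WL WR : ℝ) (hne : uL ≠ uR) :
    ((WL + WR) / 2) ^ 2 +
      ((uL + uR) / 2 * ((WL + WR) / 2) - (uL * WL + uR * WR) / 2) *
        ((WL - WR) / (uL - uR)) = WL * WR := by
  have hsub : uL - uR ≠ 0 := sub_ne_zero.mpr hne
  have hcov : (uL + uR) / 2 * ((WL + WR) / 2) - (uL * WL + uR * WR) / 2 =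
      -((uL - uR) * (WL - WR)) / 4 := by ring
  rw [hcov]
  field_simp
  ring

theorem one_div_sqrt_one_sub_sq_pos {u : ℝ} (hu : u ∈ Set.Ioo (-1 : ℝ) 1) :
    0 < 1 / Real.sqrt (1 - u ^ 2) := by
  have : 0 < 1 - u ^ 2 := by nlinarith [hu.1, hu.2]
  positivity

/-- Positivity of `Q` in the 1D entropy conservative flux: for `u_L ≠ u_R` in `(-1,1)`
with Lorentz factors `W_L, W_R`, the quantity
`⟨W⟩² + (⟨u⟩⟨W⟩ - ⟨uW⟩)·(W_L-W_R)/(u_L-u_R)` equals `W_L W_R > 0`. -/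
theorem Q_eq_WLWR_pos (uL uR : ℝ) (hL : uL ∈ Set.Ioo (-1 : ℝ) 1)
    (hR : uR ∈ Set.Ioo (-1 : ℝ) 1) (hne : uL ≠ uR)
    (WL WR : ℝ) (hWL : WL = 1 / Real.sqrt (1 - uL ^ 2))
    (hWR : WR = 1 / Real.sqrt (1 - uR ^ 2)) :
    ((WL + WR) / 2) ^ 2 +
      ((uL + uR) / 2 * ((WL + WR) / 2) - (uL * WL + uR * WR) / 2) *
        ((WL - WR) / (uL - uR)) = WL * WR ∧
    0 < ((WL + WR) / 2) ^ 2 +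
      ((uL + uR) / 2 * ((WL + WR) / 2) - (uL * WL + uR * WR) / 2) *
        ((WL - WR) / (uL - uR)) := by
  have hQ := mean_sq_add_cov_mul_slope_eq_mul uL uR WL WR hne
  refine ⟨hQ, hQ ▸ mul_pos ?_ ?_⟩
  · exact hWL ▸ one_div_sqrt_one_sub_sq_pos hL
  · exact hWR ▸ one_div_sqrt_one_sub_sq_pos hR
end

section
/- Let (u_L, v_L), (u_R, v_R) ∈ ℝ² with u_L²+v_L² < 1 and u_R²+v_R² < 1, and let W_i = 1/√(1-u_i²-v_i²) for i ∈ {L,R}. If W_L ≠ W_R, then ⟨W⟩² + (⟨u⟩⟨W⟩ - ⟨uW⟩)·⟨⟨u,v⟩⟩_Lx + (⟨v⟩⟨W⟩ - ⟨vW⟩)·⟨⟨u,v⟩⟩_Ly = W_L·W_R > 0, where ⟨⟨u,v⟩⟩_Lx = (u_L+u_R)(W_R-W_L)/((u_R²-u_L²)+(v_R²-v_L²)) and ⟨⟨u,v⟩⟩_Ly = (v_L+v_R)(W_R-W_L)/((u_R²-u_L²)+(v_R²-v_L²)), and ⟨x⟩ denotes the arithmetic mean of x_L and x_R. -/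
/-!
Since `⟨u⟩⟨W⟩ - ⟨uW⟩ = -(u_R - u_L)(W_R - W_L)/4`, and likewise for `v`, the two correction terms
add up to `-(W_R - W_L)²/4`, so the expression is `⟨W⟩² - ((W_R - W_L)/2)² = W_L W_R`; this is
pure algebra once the denominator `(u_R² - u_L²) + (v_R² - v_L²)` is nonzero. When it vanishes,
both speeds agree, hence so do the Lorentz factors, and the identity degenerates to `W² = W·W`.
-/

open Real

theorem sq_mean_add_mean_defect_mul_slope_eq_mul (uL vL uR vR WL WR : ℝ)
    (hD : (uR ^ 2 - uL ^ 2) + (vR ^ 2 - vL ^ 2) ≠ 0) :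
    ((WL + WR) / 2) ^ 2 +
      ((uL + uR) / 2 * ((WL + WR) / 2) - (uL * WL + uR * WR) / 2) *
        ((uL + uR) * (WR - WL) / ((uR ^ 2 - uL ^ 2) + (vR ^ 2 - vL ^ 2))) +
      ((vL + vR) / 2 * ((WL + WR) / 2) - (vL * WL + vR * WR) / 2) *
        ((vL + vR) * (WR - WL) / ((uR ^ 2 - uL ^ 2) + (vR ^ 2 - vL ^ 2)))
      = WL * WR := by
  field_simp
  ring

theorem one_div_sqrt_one_sub_sq_sub_sq_pos {u v : ℝ} (h : u ^ 2 + v ^ 2 < 1) :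
    0 < 1 / √(1 - u ^ 2 - v ^ 2) :=
  one_div_pos.mpr (sqrt_pos.mpr (by linarith))

theorem Q2D_eq_WLWR_pos_general (uL vL uR vR : ℝ)
    (hL : uL ^ 2 + vL ^ 2 < 1) (hR : uR ^ 2 + vR ^ 2 < 1)
    (WL WR : ℝ) (hWL : WL = 1 / Real.sqrt (1 - uL ^ 2 - vL ^ 2))
    (hWR : WR = 1 / Real.sqrt (1 - uR ^ 2 - vR ^ 2))
    (Lx Ly : ℝ)
    (hLx : Lx = (uL + uR) * (WR - WL) / ((uR ^ 2 - uL ^ 2) + (vR ^ 2 - vL ^ 2)))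
    (hLy : Ly = (vL + vR) * (WR - WL) / ((uR ^ 2 - uL ^ 2) + (vR ^ 2 - vL ^ 2))) :
    ((WL + WR) / 2) ^ 2 +
      ((uL + uR) / 2 * ((WL + WR) / 2) - (uL * WL + uR * WR) / 2) * Lx +
      ((vL + vR) / 2 * ((WL + WR) / 2) - (vL * WL + vR * WR) / 2) * Ly
      = WL * WR ∧
    0 < WL * WR := by
  refine ⟨?_, hWL ▸ hWR ▸ mul_pos (one_div_sqrt_one_sub_sq_sub_sq_pos hL) (one_div_sqrt_one_sub_sq_sub_sq_pos hR)⟩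
  subst hLx hLy
  by_cases hD : (uR ^ 2 - uL ^ 2) + (vR ^ 2 - vL ^ 2) = 0
  · have hW : WL = WR := by
      rw [hWL, hWR]
      congr 2
      linarith
    rw [hD, hW]
    simp only [div_zero, mul_zero, add_zero]
    ring
  · exact sq_mean_add_mean_defect_mul_slope_eq_mul uL vL uR vR WL WR hD

/-- Positivity of the denominator in the 2D entropy conservative flux: with
2D Lorentz factors `W_i = 1/√(1-u_i²-v_i²)` and `W_L ≠ W_R`,
`⟨W⟩² + (⟨u⟩⟨W⟩-⟨uW⟩)·⟨⟨u,v⟩⟩_Lx + (⟨v⟩⟨W⟩-⟨vW⟩)·⟨⟨u,v⟩⟩_Ly = W_L W_R > 0`. -/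
theorem Q2D_eq_WLWR_pos (uL vL uR vR : ℝ)
    (hL : uL ^ 2 + vL ^ 2 < 1) (hR : uR ^ 2 + vR ^ 2 < 1)
    (WL WR : ℝ) (hWL : WL = 1 / Real.sqrt (1 - uL ^ 2 - vL ^ 2))
    (hWR : WR = 1 / Real.sqrt (1 - uR ^ 2 - vR ^ 2))
    (hne : WL ≠ WR)
    (Lx Ly : ℝ)
    (hLx : Lx = (uL + uR) * (WR - WL) / ((uR ^ 2 - uL ^ 2) + (vR ^ 2 - vL ^ 2)))
    (hLy : Ly = (vL + vR) * (WR - WL) / ((uR ^ 2 - uL ^ 2) + (vR ^ 2 - vL ^ 2))) :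
    ((WL + WR) / 2) ^ 2 +
      ((uL + uR) / 2 * ((WL + WR) / 2) - (uL * WL + uR * WR) / 2) * Lx +
      ((vL + vR) / 2 * ((WL + WR) / 2) - (vL * WL + vR * WR) / 2) * Ly
      = WL * WR ∧
    0 < WL * WR :=
  Q2D_eq_WLWR_pos_general uL vL uR vR hL hR WL WR hWL hWR Lx Ly hLx hLy
end

section
/- Consider the one-dimensional special RHD system with ideal EOS p = (Γ-1)ρe, Γ ∈ (1,2], conservative variables U = (D, m, E) with D = ρW, m = ρhW²u, E = ρhW² - p, W = 1/√(1-u²), h = 1 + e + p/ρ. For the entropy pair η(U) = -ρWS/(Γ-1), q(U) = -ρuWS/(Γ-1) with S = ln p - Γ ln ρ, the entropy variables V = η'(U)ᵀ are given explicitly by V = ((Γ-S)/(Γ-1) + ρ/p, ρWu/p, -ρW/p)ᵀ. -/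
open Real

/-- The map from primitive variables `(ρ, u, p)` to conservative variables
`U = (D, m, E) = (ρW, ρhW²u, ρhW² - p)` for 1D special RHD with ideal EOS. -/
noncomputable def conservVars (Γ : ℝ) (x : ℝ × ℝ × ℝ) : Fin 3 → ℝ :=
  let ρ := x.1; let u := x.2.1; let p := x.2.2
  let W := 1 / Real.sqrt (1 - u ^ 2)
  let h := 1 + p / ((Γ - 1) * ρ) + p / ρ
  ![ρ * W, ρ * h * W ^ 2 * u, ρ * h * W ^ 2 - p]

/-- The entropy `η = -ρWS/(Γ-1)`, `S = ln p - Γ ln ρ`, as a function of the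
primitive variables. -/
noncomputable def entropyEta (Γ : ℝ) (x : ℝ × ℝ × ℝ) : ℝ :=
  let ρ := x.1; let u := x.2.1; let p := x.2.2
  let W := 1 / Real.sqrt (1 - u ^ 2);
  -(ρ * W * (Real.log p - Γ * Real.log ρ)) / (Γ - 1)

/-- auxiliary quotient rule in `HasFDerivAt` form -/
theorem my_div {E : Type*} [NormedAddCommGroup E] [NormedSpace ℝ E]
    {f g : E → ℝ} {f' g' : E →L[ℝ] ℝ} {x : E}
    (hf : HasFDerivAt f f' x) (hg : HasFDerivAt g g' x) (hx : g x ≠ 0) :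
    HasFDerivAt (fun y => f y / g y)
      (f x • ((-(g x ^ 2)⁻¹) • g') + (g x)⁻¹ • f') x := by
  have h2 := hf.mul ((hasDerivAt_inv hx).comp_hasFDerivAt x hg)
  exact h2.congr_of_eventuallyEq (Filter.Eventually.of_forall fun y => div_eq_mul_inv _ _)

set_option maxHeartbeats 4000000 in
/-- The entropy variables `V = η'(U)ᵀ` are given explicitly by
`V = ((Γ-S)/(Γ-1) + ρ/p, ρWu/p, -ρW/p)ᵀ`: by the chain rule, the differential of
`η` (in primitive variables) equals `Vᵀ` composed with the differential of `U`. -/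
theorem entropy_variables_explicit (Γ ρ u p : ℝ)
    (hΓ : 1 < Γ) (hΓ2 : Γ ≤ 2) (hρ : 0 < ρ) (hp : 0 < p) (hu : u ^ 2 < 1) :
    ∀ d : ℝ × ℝ × ℝ,
      fderiv ℝ (entropyEta Γ) (ρ, u, p) d =
        ∑ i : Fin 3,
          (![(Γ - (Real.log p - Γ * Real.log ρ)) / (Γ - 1) + ρ / p,
             ρ * (1 / Real.sqrt (1 - u ^ 2)) * u / p,
             -(ρ * (1 / Real.sqrt (1 - u ^ 2))) / p] i) *
          fderiv ℝ (conservVars Γ) (ρ, u, p) d i := by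
  rintro ⟨d1, d2, d3⟩
  have h1u : (0:ℝ) < 1 - u ^ 2 := by linarith
  have hs0 : 0 < Real.sqrt (1 - u ^ 2) := Real.sqrt_pos.2 h1u
  have hΓ1 : Γ - 1 ≠ 0 := by intro h; linarith [sub_eq_zero.1 h]
  -- basic projections
  have hρ1 : HasFDerivAt (fun x : ℝ × ℝ × ℝ => x.1)
      (ContinuousLinearMap.fst ℝ ℝ (ℝ × ℝ)) (ρ, u, p) := hasFDerivAt_fst
  have hu1 : HasFDerivAt (fun x : ℝ × ℝ × ℝ => x.2.1)
      ((ContinuousLinearMap.fst ℝ ℝ ℝ).comp (ContinuousLinearMap.snd ℝ ℝ (ℝ × ℝ))) (ρ, u, p) :=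
    hasFDerivAt_fst.comp _ hasFDerivAt_snd
  have hp1 : HasFDerivAt (fun x : ℝ × ℝ × ℝ => x.2.2)
      ((ContinuousLinearMap.snd ℝ ℝ ℝ).comp (ContinuousLinearMap.snd ℝ ℝ (ℝ × ℝ))) (ρ, u, p) :=
    hasFDerivAt_snd.comp _ hasFDerivAt_snd
  -- √(1-u²) and W = 1/√(1-u²)
  have hg : HasFDerivAt (fun x : ℝ × ℝ × ℝ => 1 - x.2.1 ^ 2) _ (ρ, u, p) :=
    (hasFDerivAt_const (1:ℝ) _).sub (by have h := (hasDerivAt_pow 2 u).comp_hasFDerivAt (ρ, u, p) hu1; exact h)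
  have hsf : HasFDerivAt (fun x : ℝ × ℝ × ℝ => Real.sqrt (1 - x.2.1 ^ 2)) _ (ρ, u, p) :=
    (Real.hasDerivAt_sqrt h1u.ne').comp_hasFDerivAt (ρ, u, p) hg
  have hW : HasFDerivAt (fun x : ℝ × ℝ × ℝ => 1 / Real.sqrt (1 - x.2.1 ^ 2)) _ (ρ, u, p) :=
    my_div (hasFDerivAt_const (1:ℝ) _) hsf hs0.ne'
  have hW2 : HasFDerivAt (fun x : ℝ × ℝ × ℝ => (1 / Real.sqrt (1 - x.2.1 ^ 2)) ^ 2) _ (ρ, u, p) :=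
    id (by have h := (hasDerivAt_pow 2 (1 / Real.sqrt (1 - u ^ 2))).comp_hasFDerivAt (ρ, u, p) hW; exact h)
  -- specific enthalpy
  have hh : HasFDerivAt (fun x : ℝ × ℝ × ℝ =>
      1 + x.2.2 / ((Γ - 1) * x.1) + x.2.2 / x.1) _ (ρ, u, p) :=
    (((hasFDerivAt_const (1:ℝ) _).add
      (my_div hp1 ((hasFDerivAt_const (Γ - 1) _).mul hρ1) (mul_ne_zero hΓ1 hρ.ne'))).add
      (my_div hp1 hρ1 hρ.ne'))
  -- entropy η
  have hS : HasFDerivAt (fun x : ℝ × ℝ × ℝ => Real.log x.2.2 - Γ * Real.log x.1) _ (ρ, u, p) :=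
    id (by have h := (((Real.hasDerivAt_log hp.ne').comp_hasFDerivAt (ρ, u, p) hp1).sub
      (((Real.hasDerivAt_log hρ.ne').comp_hasFDerivAt (ρ, u, p) hρ1).const_mul Γ)); exact h)
  have hη : HasFDerivAt (entropyEta Γ) _ (ρ, u, p) :=
    my_div (((hρ1.mul hW).mul hS).neg) (hasFDerivAt_const (Γ - 1) _) hΓ1
  -- components of U
  have hC0 : HasFDerivAt (fun x : ℝ × ℝ × ℝ => conservVars Γ x 0) _ (ρ, u, p) := hρ1.mul hW
  have hC1 : HasFDerivAt (fun x : ℝ × ℝ × ℝ => conservVars Γ x 1) _ (ρ, u, p) :=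
    ((hρ1.mul hh).mul hW2).mul hu1
  have hC2 : HasFDerivAt (fun x : ℝ × ℝ × ℝ => conservVars Γ x 2) _ (ρ, u, p) :=
    ((hρ1.mul hh).mul hW2).sub hp1
  have hdiff : ∀ i, DifferentiableAt ℝ (fun x : ℝ × ℝ × ℝ => conservVars Γ x i) (ρ, u, p) := by
    intro i
    fin_cases i
    · exact hC0.differentiableAt
    · exact hC1.differentiableAt
    · exact hC2.differentiableAt
  have key : fderiv ℝ (conservVars Γ) (ρ, u, p) =
      ContinuousLinearMap.pi (fun i => fderiv ℝ (fun x : ℝ × ℝ × ℝ => conservVars Γ x i) (ρ, u, p)) :=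
    fderiv_pi hdiff
  have hs2 : Real.sqrt (1 - u ^ 2) ^ 2 = 1 - u ^ 2 := Real.sq_sqrt h1u.le
  have hs3 : Real.sqrt (1 - u ^ 2) ^ 3 = (1 - u ^ 2) * Real.sqrt (1 - u ^ 2) := by
    rw [pow_succ, hs2]
  have hs4 : Real.sqrt (1 - u ^ 2) ^ 4 = (1 - u ^ 2) ^ 2 := by
    rw [show (4:ℕ) = 2 * 2 from rfl, pow_mul, hs2]
  have hs5 : Real.sqrt (1 - u ^ 2) ^ 5 = (1 - u ^ 2) ^ 2 * Real.sqrt (1 - u ^ 2) := by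
    rw [pow_succ, hs4]
  have hs6 : Real.sqrt (1 - u ^ 2) ^ 6 = (1 - u ^ 2) ^ 3 := by
    rw [show (6:ℕ) = 2 * 3 from rfl, pow_mul, hs2]
  have h1une : (1:ℝ) - u ^ 2 ≠ 0 := h1u.ne'
  have hsne : Real.sqrt (1 - u ^ 2) ≠ 0 := hs0.ne'
  have Eη : fderiv ℝ (entropyEta Γ) (ρ, u, p) (d1, d2, d3) =
      (Γ - (Real.log p - Γ * Real.log ρ)) / ((Γ - 1) * Real.sqrt (1 - u ^ 2)) * d1
      - ρ * (Real.log p - Γ * Real.log ρ) * u /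
          ((Γ - 1) * (1 - u ^ 2) * Real.sqrt (1 - u ^ 2)) * d2
      - ρ / ((Γ - 1) * Real.sqrt (1 - u ^ 2) * p) * d3 := by
    rw [hη.fderiv]
    simp only [ContinuousLinearMap.add_apply, ContinuousLinearMap.smul_apply,
      ContinuousLinearMap.sub_apply, ContinuousLinearMap.comp_apply,
      ContinuousLinearMap.coe_fst', ContinuousLinearMap.coe_snd',
      ContinuousLinearMap.zero_apply, ContinuousLinearMap.neg_apply, smul_eq_mul]
    norm_num [Pi.mul_apply]
    set s := Real.sqrt (1 - u ^ 2) with hsdef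
    simp only [← hs2]
    field_simp
    ring_nf
    all_goals simp only [hs6, hs5, hs4, hs3, hs2]
    all_goals ring
  have E0 : fderiv ℝ (fun x : ℝ × ℝ × ℝ => conservVars Γ x 0) (ρ, u, p) (d1, d2, d3) =
      d1 / Real.sqrt (1 - u ^ 2)
      + ρ * u / ((1 - u ^ 2) * Real.sqrt (1 - u ^ 2)) * d2 := by
    rw [hC0.fderiv]
    simp only [ContinuousLinearMap.add_apply, ContinuousLinearMap.smul_apply,
      ContinuousLinearMap.sub_apply, ContinuousLinearMap.comp_apply,
      ContinuousLinearMap.coe_fst', ContinuousLinearMap.coe_snd',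
      ContinuousLinearMap.zero_apply, ContinuousLinearMap.neg_apply, smul_eq_mul]
    norm_num [Pi.mul_apply]
    set s := Real.sqrt (1 - u ^ 2) with hsdef
    simp only [← hs2]
    field_simp
    ring_nf
    all_goals simp only [hs6, hs5, hs4, hs3, hs2]
    all_goals ring
  have E1 : fderiv ℝ (fun x : ℝ × ℝ × ℝ => conservVars Γ x 1) (ρ, u, p) (d1, d2, d3) =
      u / (1 - u ^ 2) * d1
      + (ρ + Γ * p / (Γ - 1)) * (1 + u ^ 2) / (1 - u ^ 2) ^ 2 * d2
      + Γ * u / ((Γ - 1) * (1 - u ^ 2)) * d3 := by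
    rw [hC1.fderiv]
    simp only [ContinuousLinearMap.add_apply, ContinuousLinearMap.smul_apply,
      ContinuousLinearMap.sub_apply, ContinuousLinearMap.comp_apply,
      ContinuousLinearMap.coe_fst', ContinuousLinearMap.coe_snd',
      ContinuousLinearMap.zero_apply, ContinuousLinearMap.neg_apply, smul_eq_mul]
    norm_num [Pi.mul_apply]
    set s := Real.sqrt (1 - u ^ 2) with hsdef
    simp only [← hs2]
    field_simp
    ring_nf
    all_goals simp only [hs6, hs5, hs4, hs3, hs2]
    all_goals ring
  have E2 : fderiv ℝ (fun x : ℝ × ℝ × ℝ => conservVars Γ x 2) (ρ, u, p) (d1, d2, d3) =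
      d1 / (1 - u ^ 2)
      + 2 * (ρ + Γ * p / (Γ - 1)) * u / (1 - u ^ 2) ^ 2 * d2
      + (Γ / ((Γ - 1) * (1 - u ^ 2)) - 1) * d3 := by
    rw [hC2.fderiv]
    simp only [ContinuousLinearMap.add_apply, ContinuousLinearMap.smul_apply,
      ContinuousLinearMap.sub_apply, ContinuousLinearMap.comp_apply,
      ContinuousLinearMap.coe_fst', ContinuousLinearMap.coe_snd',
      ContinuousLinearMap.zero_apply, ContinuousLinearMap.neg_apply, smul_eq_mul]
    norm_num [Pi.mul_apply]
    set s := Real.sqrt (1 - u ^ 2) with hsdef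
    simp only [← hs2]
    field_simp
    ring_nf
    all_goals simp only [hs6, hs5, hs4, hs3, hs2]
    all_goals ring
  rw [key]
  simp only [ContinuousLinearMap.pi_apply]
  rw [Fin.sum_univ_three]
  simp only [Matrix.cons_val_zero, Matrix.cons_val_one, Matrix.head_cons,
    Matrix.cons_val_two, Matrix.tail_cons]
  rw [Eη, E0, E1, E2]
  field_simp
  ring
end

section
/- Let z₁ = ρ, z₂ = ρ/p, z₃ = u for a pair of states (ρ_i, u_i, p_i), i ∈ {L,R}, with ρ_i, p_i > 0 and |u_i| < 1. Then the jump of the first entropy variable V₁ = (Γ-S)/(Γ-1) + ρ/p (with S = ln p - Γ ln ρ) satisfies [[V₁]] = [[z₁]]/⟨z₁⟩_ln + (1/(Γ-1))·[[z₂]]/⟨z₂⟩_ln + [[z₂]], where ⟨·⟩_ln denotes the logarithmic mean and [[·]] the jump. -/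
open Real

/-- The logarithmic mean (continuous extension on the diagonal). -/
noncomputable def logMean (aL aR : ℝ) : ℝ :=
  if aL = aR then aL else (aR - aL) / (Real.log aR - Real.log aL)

/-! Dividing a jump by the logarithmic mean gives the jump of the logarithm; since
`log (ρ / p) = log ρ - log p`, both sides of the identity become the same linear
combination of `[[log ρ]]`, `[[log p]]` and `[[ρ / p]]`. -/

lemma sub_div_logMean_eq_log_sub_log {aL aR : ℝ} (hL : 0 < aL) (hR : 0 < aR) (h : aL ≠ aR) :
    (aR - aL) / logMean aL aR = Real.log aR - Real.log aL := by
  have hlog : Real.log aR - Real.log aL ≠ 0 :=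
    sub_ne_zero.mpr fun hc => h (Real.log_injOn_pos hL hR hc.symm)
  have hjump : aR - aL ≠ 0 := sub_ne_zero.mpr h.symm
  rw [logMean, if_neg h, div_div_cancel₀ hjump]

theorem jump_V1_general (Γ ρL pL ρR pR : ℝ)
    (hΓ : 1 < Γ)
    (hρL : 0 < ρL) (hρR : 0 < ρR) (hpL : 0 < pL) (hpR : 0 < pR)
    (h1 : ρL ≠ ρR) (h2 : ρL / pL ≠ ρR / pR) :
    ((Γ - (Real.log pR - Γ * Real.log ρR)) / (Γ - 1) + ρR / pR)
      - ((Γ - (Real.log pL - Γ * Real.log ρL)) / (Γ - 1) + ρL / pL)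
    = (ρR - ρL) / logMean ρL ρR
      + (1 / (Γ - 1)) * ((ρR / pR - ρL / pL) / logMean (ρL / pL) (ρR / pR))
      + (ρR / pR - ρL / pL) := by
  rw [sub_div_logMean_eq_log_sub_log hρL hρR h1,
    sub_div_logMean_eq_log_sub_log (div_pos hρL hpL) (div_pos hρR hpR) h2,
    Real.log_div hρL.ne' hpL.ne', Real.log_div hρR.ne' hpR.ne']
  have hΓ1 : Γ - 1 ≠ 0 := sub_ne_zero.mpr hΓ.ne'
  field_simp
  ring

/-- Jump of the first 1D entropy variable `V₁ = (Γ-S)/(Γ-1) + ρ/p`: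
`[[V₁]] = [[z₁]]/⟨z₁⟩_ln + (1/(Γ-1))[[z₂]]/⟨z₂⟩_ln + [[z₂]]` with
`z₁ = ρ`, `z₂ = ρ/p`. -/
theorem jump_V1 (Γ ρL uL pL ρR uR pR : ℝ)
    (hΓ : 1 < Γ) (hΓ2 : Γ ≤ 2)
    (hρL : 0 < ρL) (hρR : 0 < ρR) (hpL : 0 < pL) (hpR : 0 < pR)
    (huL : |uL| < 1) (huR : |uR| < 1)
    (h1 : ρL ≠ ρR) (h2 : ρL / pL ≠ ρR / pR) :
    ((Γ - (Real.log pR - Γ * Real.log ρR)) / (Γ - 1) + ρR / pR)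
      - ((Γ - (Real.log pL - Γ * Real.log ρL)) / (Γ - 1) + ρL / pL)
    = (ρR - ρL) / logMean ρL ρR
      + (1 / (Γ - 1)) * ((ρR / pR - ρL / pL) / logMean (ρL / pL) (ρR / pR))
      + (ρR / pR - ρL / pL) :=
  jump_V1_general Γ ρL pL ρR pR hΓ hρL hρR hpL hpR h1 h2
end

section
/- With z₂ = ρ/p and z₃ = u, the jump of the third 1D entropy variable V₃ = -ρW/p satisfies [[V₃]] = -⟨W⟩[[z₂]] - ⟨z₂⟩⟨⟨z₃⟩⟩_L[[z₃]], where ⟨⟨z₃⟩⟩_L is the Lorentz mean satisfying [[W]] = ⟨⟨z₃⟩⟩_L[[z₃]], ⟨·⟩ the arithmetic mean, and [[·]] the jump. -/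
open Real

/-
The entropy variable factors as `V₃ = -z₂ W`, so the discrete product rule
`[[a b]] = ⟨a⟩[[b]] + ⟨b⟩[[a]]` reduces the claim to `[[W]] = ⟨⟨u⟩⟩_L [[u]]`. Writing
`s = √(1 - u²)`, this is `1/s_R - 1/s_L = (s_L² - s_R²) / (s_L s_R (s_L + s_R))` together with
`s_L² - s_R² = u_R² - u_L² = (u_L + u_R)(u_R - u_L)`.
-/

theorem mul_sub_mul_eq_mean_mul_sub_add_mean_mul_sub {R : Type*} [Field R] [NeZero (2 : R)]
    (a₁ a₂ b₁ b₂ : R) :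
    a₂ * b₂ - a₁ * b₁ = (a₁ + a₂) / 2 * (b₂ - b₁) + (b₁ + b₂) / 2 * (a₂ - a₁) := by
  field_simp
  ring

theorem one_div_sub_one_div_eq_sq_sub_sq_div {K : Type*} [Field K] {s t : K} (hs : s ≠ 0)
    (ht : t ≠ 0) (hst : s + t ≠ 0) :
    1 / t - 1 / s = (s ^ 2 - t ^ 2) / (s * t * (s + t)) := by
  field_simp
  ring

theorem lorentz_factor_sub_eq_lorentzMean_mul_sub {a b : ℝ} (ha : |a| < 1) (hb : |b| < 1) :
    1 / √(1 - b ^ 2) - 1 / √(1 - a ^ 2)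
      = (a + b) / (√(1 - a ^ 2) * √(1 - b ^ 2) * (√(1 - a ^ 2) + √(1 - b ^ 2))) * (b - a) := by
  have ha' : 0 < 1 - a ^ 2 := sub_pos.mpr ((sq_lt_one_iff_abs_lt_one a).mpr ha)
  have hb' : 0 < 1 - b ^ 2 := sub_pos.mpr ((sq_lt_one_iff_abs_lt_one b).mpr hb)
  have hsa := sqrt_pos.mpr ha'
  have hsb := sqrt_pos.mpr hb'
  rw [one_div_sub_one_div_eq_sq_sub_sq_div hsa.ne' hsb.ne' (add_pos hsa hsb).ne',
    sq_sqrt ha'.le, sq_sqrt hb'.le, div_mul_eq_mul_div]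
  ring

theorem jump_V3_general (ρL uL pL ρR uR pR : ℝ)
    (huL : |uL| < 1) (huR : |uR| < 1)
    (WL WR LM : ℝ)
    (hWL : WL = 1 / Real.sqrt (1 - uL ^ 2))
    (hWR : WR = 1 / Real.sqrt (1 - uR ^ 2))
    (hLM : LM = (uL + uR) /
      (Real.sqrt (1 - uL ^ 2) * Real.sqrt (1 - uR ^ 2) *
        (Real.sqrt (1 - uL ^ 2) + Real.sqrt (1 - uR ^ 2)))) :
    (-(ρR * WR) / pR) - (-(ρL * WL) / pL)
      = -((WL + WR) / 2) * (ρR / pR - ρL / pL)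
        - ((ρL / pL + ρR / pR) / 2) * LM * (uR - uL) := by
  have hW : WR - WL = LM * (uR - uL) := by
    rw [hWL, hWR, hLM]
    exact lorentz_factor_sub_eq_lorentzMean_mul_sub huL huR
  calc (-(ρR * WR) / pR) - (-(ρL * WL) / pL) = -(WR * (ρR / pR) - WL * (ρL / pL)) := by ring
    _ = -((WL + WR) / 2 * (ρR / pR - ρL / pL) + (ρL / pL + ρR / pR) / 2 * (WR - WL)) := by
      rw [mul_sub_mul_eq_mean_mul_sub_add_mean_mul_sub]
    _ = _ := by rw [hW]; ring

/-- Jump of the third 1D entropy variable `V₃ = -ρW/p`: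
`[[V₃]] = -⟨W⟩[[z₂]] - ⟨z₂⟩⟨⟨z₃⟩⟩_L[[z₃]]` with `z₂ = ρ/p`, `z₃ = u`. -/
theorem jump_V3 (ρL uL pL ρR uR pR : ℝ)
    (hρL : 0 < ρL) (hρR : 0 < ρR) (hpL : 0 < pL) (hpR : 0 < pR)
    (huL : |uL| < 1) (huR : |uR| < 1)
    (WL WR LM : ℝ)
    (hWL : WL = 1 / Real.sqrt (1 - uL ^ 2))
    (hWR : WR = 1 / Real.sqrt (1 - uR ^ 2))
    (hLM : LM = (uL + uR) /
      (Real.sqrt (1 - uL ^ 2) * Real.sqrt (1 - uR ^ 2) *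
        (Real.sqrt (1 - uL ^ 2) + Real.sqrt (1 - uR ^ 2)))) :
    (-(ρR * WR) / pR) - (-(ρL * WL) / pL)
      = -((WL + WR) / 2) * (ρR / pR - ρL / pL)
        - ((ρL / pL + ρR / pR) / 2) * LM * (uR - uL) :=
  jump_V3_general ρL uL pL ρR uR pR huL huR WL WR LM hWL hWR hLM
end

section
/- With z₂ = ρ/p, z₃ = u, the jump of the second 1D entropy variable V₂ = ρWu/p satisfies [[V₂]] = ⟨uW⟩[[z₂]] + ⟨z₂⟩⟨W⟩[[z₃]] + ⟨z₂⟩⟨z₃⟩⟨⟨z₃⟩⟩_L[[z₃]], where [[W]] = ⟨⟨z₃⟩⟩_L[[z₃]]. -/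
open Real

/-!
Since `V₂ = z₂ · (uW)`, two applications of the discrete product rule
`[[a b]] = ⟨a⟩[[b]] + ⟨b⟩[[a]]` reduce the claim to `[[W]] = ⟨⟨u⟩⟩_L [[u]]`. With `s = √(1 - u²)`,
that identity is `1/s_R - 1/s_L = (s_L² - s_R²) / (s_L s_R (s_L + s_R))` and
`s_L² - s_R² = (u_L + u_R)(u_R - u_L)`.
-/

theorem jump_mul (aL aR bL bR : ℝ) :
    aR * bR - aL * bL = (aL + aR) / 2 * (bR - bL) + (bL + bR) / 2 * (aR - aL) := by
  ring

theorem one_div_sqrt_one_sub_sq_sub {uL uR : ℝ} (huL : |uL| < 1) (huR : |uR| < 1) :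
    1 / √(1 - uR ^ 2) - 1 / √(1 - uL ^ 2)
      = (uL + uR) / (√(1 - uL ^ 2) * √(1 - uR ^ 2) * (√(1 - uL ^ 2) + √(1 - uR ^ 2)))
          * (uR - uL) := by
  have hL : 0 < 1 - uL ^ 2 := by nlinarith [sq_abs uL, abs_nonneg uL]
  have hR : 0 < 1 - uR ^ 2 := by nlinarith [sq_abs uR, abs_nonneg uR]
  have hsL := sq_sqrt hL.le
  have hsR := sq_sqrt hR.le
  have := sqrt_pos.mpr hL
  have := sqrt_pos.mpr hR
  field_simp
  linear_combination hsL - hsR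

theorem jump_V2_general (ρL uL pL ρR uR pR : ℝ)
    (huL : |uL| < 1) (huR : |uR| < 1)
    (WL WR LM : ℝ)
    (hWL : WL = 1 / Real.sqrt (1 - uL ^ 2))
    (hWR : WR = 1 / Real.sqrt (1 - uR ^ 2))
    (hLM : LM = (uL + uR) /
      (Real.sqrt (1 - uL ^ 2) * Real.sqrt (1 - uR ^ 2) *
        (Real.sqrt (1 - uL ^ 2) + Real.sqrt (1 - uR ^ 2)))) :
    (ρR * WR * uR / pR) - (ρL * WL * uL / pL)
      = ((uL * WL + uR * WR) / 2) * (ρR / pR - ρL / pL)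
        + ((ρL / pL + ρR / pR) / 2) * ((WL + WR) / 2) * (uR - uL)
        + ((ρL / pL + ρR / pR) / 2) * ((uL + uR) / 2) * LM * (uR - uL) := by
  have hW : WR - WL = LM * (uR - uL) := by
    rw [hWL, hWR, hLM]
    exact one_div_sqrt_one_sub_sq_sub huL huR
  have huW : uR * WR - uL * WL = (uL + uR) / 2 * (WR - WL) + (WL + WR) / 2 * (uR - uL) :=
    jump_mul uL uR WL WR
  have hV : ρR * WR * uR / pR - ρL * WL * uL / pL
      = (ρL / pL + ρR / pR) / 2 * (uR * WR - uL * WL)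
        + (uL * WL + uR * WR) / 2 * (ρR / pR - ρL / pL) := by
    rw [← jump_mul]
    ring
  rw [hV, huW, hW]
  ring

/-- Jump of the second 1D entropy variable `V₂ = ρWu/p`:
`[[V₂]] = ⟨uW⟩[[z₂]] + ⟨z₂⟩⟨W⟩[[z₃]] + ⟨z₂⟩⟨z₃⟩⟨⟨z₃⟩⟩_L[[z₃]]` with
`z₂ = ρ/p`, `z₃ = u`. -/
theorem jump_V2 (ρL uL pL ρR uR pR : ℝ)
    (hρL : 0 < ρL) (hρR : 0 < ρR) (hpL : 0 < pL) (hpR : 0 < pR)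
    (huL : |uL| < 1) (huR : |uR| < 1)
    (WL WR LM : ℝ)
    (hWL : WL = 1 / Real.sqrt (1 - uL ^ 2))
    (hWR : WR = 1 / Real.sqrt (1 - uR ^ 2))
    (hLM : LM = (uL + uR) /
      (Real.sqrt (1 - uL ^ 2) * Real.sqrt (1 - uR ^ 2) *
        (Real.sqrt (1 - uL ^ 2) + Real.sqrt (1 - uR ^ 2)))) :
    (ρR * WR * uR / pR) - (ρL * WL * uL / pL)
      = ((uL * WL + uR * WR) / 2) * (ρR / pR - ρL / pL)
        + ((ρL / pL + ρR / pR) / 2) * ((WL + WR) / 2) * (uR - uL)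
        + ((ρL / pL + ρR / pR) / 2) * ((uL + uR) / 2) * LM * (uR - uL) :=
  jump_V2_general ρL uL pL ρR uR pR huL huR WL WR LM hWL hWR hLM
end

section
/- The one-dimensional entropy conservative flux F̃ = (F̃₁, F̃₂, F̃₃) defined by F̃₁ = ⟨z₁⟩_ln⟨uW⟩, F̃₂ = Q⁻¹[(1 + 1/((Γ-1)⟨z₂⟩_ln))⟨z₂⟩⟨⟨z₃⟩⟩_L F̃₁ + ⟨z₁⟩⟨W⟩² + ⟨z₁⟩⟨z₃⟩⟨W⟩⟨⟨z₃⟩⟩_L], F̃₃ = Q⁻¹[⟨z₁⟩⟨W⟩⟨uW⟩ + ⟨z₁⟩⟨z₃⟩⟨uW⟩⟨⟨z₃⟩⟩_L + (1 + 1/((Γ-1)⟨z₂⟩_ln))F̃₁(⟨z₂⟩⟨W⟩ + ⟨z₂⟩⟨z₃⟩⟨⟨z₃⟩⟩_L)], with Q = ⟨z₂⟩⟨W⟩² + ⟨z₂⟩⟨z₃⟩⟨W⟩⟨⟨z₃⟩⟩_L - ⟨z₂⟩⟨uW⟩⟨⟨z₃⟩⟩_L, is consistent: when (ρ_L,u_L,p_L)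 = (ρ_R,u_R,p_R) = (ρ,u,p), one has F̃₁ = ρuW, F̃₂ = ρhW²u² + p, and F̃₃ = ρhW²u, where h = 1 + Γp/((Γ-1)ρ). -/
open Real

/-! At equal states every mean collapses to its argument and the Lorentz mean to `uW³`, so the
cross terms of `Q` cancel and `Q = z₂W²`. The momentum component is then an identity of
rational functions in `ρ, p, Γ, u, W`; the energy component also needs `W² = 1 + u²W²`,
i.e. `W²(1 - u²) = 1`. -/

lemma one_sub_sq_pos_of_abs_lt_one {u : ℝ} (hu : |u| < 1) : 0 < 1 - u ^ 2 :=
  sub_pos.mpr ((sq_lt_one_iff_abs_lt_one u).mpr hu)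

lemma lorentzFactor_sq_mul {u : ℝ} (hu : |u| < 1) :
    (1 / √(1 - u ^ 2)) ^ 2 * (1 - u ^ 2) = 1 := by
  rw [div_pow, sq_sqrt (one_sub_sq_pos_of_abs_lt_one hu).le]
  field_simp [(one_sub_sq_pos_of_abs_lt_one hu).ne']

lemma lorentzMean_self (u s : ℝ) (hs : s ≠ 0) :
    (u + u) / (s * s * (s + s)) = u * (1 / s) ^ 3 := by
  field_simp

section EqualStates

variable {K : Type*} [Field K] {Γ ρ p u W : K}

lemma ecFlux_momentum_self (hΓ : Γ - 1 ≠ 0) (hρ : ρ ≠ 0) (hp : p ≠ 0) (hW : W ≠ 0) :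
    (ρ / p * W ^ 2 + ρ / p * u * W * (u * W ^ 3) - ρ / p * (u * W) * (u * W ^ 3))⁻¹ *
        ((1 + 1 / ((Γ - 1) * (ρ / p))) * (ρ / p) * (u * W ^ 3) * (ρ * (u * W))
          + ρ * W ^ 2 + ρ * u * W * (u * W ^ 3)) =
      ρ * (1 + Γ * p / ((Γ - 1) * ρ)) * W ^ 2 * u ^ 2 + p := by
  field_simp
  ring

lemma ecFlux_energy_self (hΓ : Γ - 1 ≠ 0) (hρ : ρ ≠ 0) (hp : p ≠ 0) (hW : W ≠ 0)
    (hWu : W ^ 2 * (1 - u ^ 2) = 1) :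
    (ρ / p * W ^ 2 + ρ / p * u * W * (u * W ^ 3) - ρ / p * (u * W) * (u * W ^ 3))⁻¹ *
        (ρ * W * (u * W) + ρ * u * (u * W) * (u * W ^ 3)
          + (1 + 1 / ((Γ - 1) * (ρ / p))) * (ρ * (u * W)) * (ρ / p * W + ρ / p * u * (u * W ^ 3))) =
      ρ * (1 + Γ * p / ((Γ - 1) * ρ)) * W ^ 2 * u := by
  field_simp
  linear_combination (-u * (ρ * (Γ - 1) + p * Γ)) * hWu

end EqualStates

theorem ec_flux_consistent_general (Γ ρ u p : ℝ)
    (hΓ : 1 < Γ) (hρ : 0 < ρ) (hp : 0 < p) (hu : |u| < 1)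
    (W h LM z1 z2 F1 Q F2 F3 : ℝ)
    (hW : W = 1 / Real.sqrt (1 - u ^ 2))
    (hh : h = 1 + Γ * p / ((Γ - 1) * ρ))
    -- the Lorentz mean at equal states
    (hLM : LM = (u + u) /
      (Real.sqrt (1 - u ^ 2) * Real.sqrt (1 - u ^ 2) *
        (Real.sqrt (1 - u ^ 2) + Real.sqrt (1 - u ^ 2))))
    -- arithmetic and logarithmic means of z₁ = ρ and z₂ = ρ/p at equal states
    (hz1 : z1 = ρ) (hz2 : z2 = ρ / p)
    (hF1 : F1 = z1 * (u * W))
    (hQ : Q = z2 * W ^ 2 + z2 * u * W * LM - z2 * (u * W) * LM)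
    (hF2 : F2 = Q⁻¹ * ((1 + 1 / ((Γ - 1) * z2)) * z2 * LM * F1
      + z1 * W ^ 2 + z1 * u * W * LM))
    (hF3 : F3 = Q⁻¹ * (z1 * W * (u * W) + z1 * u * (u * W) * LM
      + (1 + 1 / ((Γ - 1) * z2)) * F1 * (z2 * W + z2 * u * LM))) :
    LM = u * W ^ 3 ∧
    F1 = ρ * u * W ∧
    F2 = ρ * h * W ^ 2 * u ^ 2 + p ∧
    F3 = ρ * h * W ^ 2 * u := by
  have hWu : W ^ 2 * (1 - u ^ 2) = 1 := hW ▸ lorentzFactor_sq_mul hu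
  have hW0 : W ≠ 0 := by
    rintro rfl
    simp at hWu
  have hLM' : LM = u * W ^ 3 := by
    rw [hLM, hW]
    exact lorentzMean_self u _ (sqrt_pos.mpr (one_sub_sq_pos_of_abs_lt_one hu)).ne'
  have hΓ1 : Γ - 1 ≠ 0 := (sub_pos.mpr hΓ).ne'
  subst hh hz1 hz2 hF1 hQ hF2 hF3 hLM'
  exact ⟨rfl, by ring, ecFlux_momentum_self hΓ1 hρ.ne' hp.ne' hW0,
    ecFlux_energy_self hΓ1 hρ.ne' hp.ne' hW0 hWu⟩

/-- Consistency of the 1D entropy conservative flux: when the left and right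
states coincide with `(ρ,u,p)`, the arithmetic and logarithmic means reduce to
the common values, the Lorentz mean reduces to `uW³`, and the flux components
equal `(ρuW, ρhW²u² + p, ρhW²u)`. -/
theorem ec_flux_consistent (Γ ρ u p : ℝ)
    (hΓ : 1 < Γ) (hΓ2 : Γ ≤ 2) (hρ : 0 < ρ) (hp : 0 < p) (hu : |u| < 1)
    (W h LM z1 z2 F1 Q F2 F3 : ℝ)
    (hW : W = 1 / Real.sqrt (1 - u ^ 2))
    (hh : h = 1 + Γ * p / ((Γ - 1) * ρ))
    -- the Lorentz mean at equal states
    (hLM : LM = (u + u) /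
      (Real.sqrt (1 - u ^ 2) * Real.sqrt (1 - u ^ 2) *
        (Real.sqrt (1 - u ^ 2) + Real.sqrt (1 - u ^ 2))))
    -- arithmetic and logarithmic means of z₁ = ρ and z₂ = ρ/p at equal states
    (hz1 : z1 = ρ) (hz2 : z2 = ρ / p)
    (hF1 : F1 = z1 * (u * W))
    (hQ : Q = z2 * W ^ 2 + z2 * u * W * LM - z2 * (u * W) * LM)
    (hF2 : F2 = Q⁻¹ * ((1 + 1 / ((Γ - 1) * z2)) * z2 * LM * F1
      + z1 * W ^ 2 + z1 * u * W * LM))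
    (hF3 : F3 = Q⁻¹ * (z1 * W * (u * W) + z1 * u * (u * W) * LM
      + (1 + 1 / ((Γ - 1) * z2)) * F1 * (z2 * W + z2 * u * LM))) :
    LM = u * W ^ 3 ∧
    F1 = ρ * u * W ∧
    F2 = ρ * h * W ^ 2 * u ^ 2 + p ∧
    F3 = ρ * h * W ^ 2 * u :=
  ec_flux_consistent_general Γ ρ u p hΓ hρ hp hu W h LM z1 z2 F1 Q F2 F3 hW hh hLM hz1 hz2 hF1 hQ
    hF2 hF3
end

section
/- The one-dimensional entropy conservative flux F̃ = (F̃₁, F̃₂, F̃₃) defined in terms of arithmetic, logarithmic, and Lorentz means of the parameter vector z = (ρ, ρ/p, u) satisfies Tadmor's condition [[V]]ᵀ F̃ = [[ψ]], where V = ((Γ-S)/(Γ-1) + ρ/p, ρWu/p, -ρW/p)ᵀ are the entropy variables and ψ = ρuW is the potential, for any pair of admissible states (ρ_i, u_i, p_i), i ∈ {L,R}. -/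
/-!
Write `z₂ = ρ/p`. The entropy variables and the potential are products of `ρ, z₂, u, W` and of
logarithms, so their jumps are linear in `[[ρ]]`, `[[z₂]]`, `[[u]]`: a logarithmic jump is a jump
divided by the logarithmic mean, a product obeys the discrete product rule
`[[ab]] = ⟨a⟩[[b]] + ⟨b⟩[[a]]`, and `[[W]] = ⟨⟨u⟩⟩_L [[u]]`. With `F̃₁ = ⟨ρ⟩_ln ⟨uW⟩` the
coefficients of `[[ρ]]` in `[[V]]ᵀ F̃` and `[[ψ]]` agree, and matching the coefficients of `[[z₂]]`
and `[[u]]` is a 2 × 2 linear system in `(F̃₂, F̃₃)` whose Cramer solution is the given flux;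
its determinant is `⟨z₂⟩ W_L W_R > 0`.
-/

open Real

theorem log_sub_log_eq_div_logMean (a b : ℝ) :
    log b - log a = (b - a) / logMean a b := by
  unfold logMean
  split_ifs with h
  · simp [h]
  · exact (div_div_cancel₀ (sub_ne_zero.mpr (Ne.symm h))).symm

theorem logMean_pos {a b : ℝ} (ha : 0 < a) (hb : 0 < b) : 0 < logMean a b := by
  unfold logMean
  split_ifs with h
  · exact ha
  rcases lt_or_gt_of_ne h with hab | hba
  · exact div_pos (sub_pos.mpr hab) (sub_pos.mpr (log_lt_log ha hab))
  · exact div_pos_of_neg_of_neg (sub_neg.mpr hba) (sub_neg.mpr (log_lt_log hb hba))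

theorem entropyVariable_jump {Γ ρL pL ρR pR : ℝ} (hΓ : Γ ≠ 1)
    (hρL : ρL ≠ 0) (hρR : ρR ≠ 0) (hpL : pL ≠ 0) (hpR : pR ≠ 0) :
    ((Γ - (log pR - Γ * log ρR)) / (Γ - 1) + ρR / pR)
        - ((Γ - (log pL - Γ * log ρL)) / (Γ - 1) + ρL / pL)
      = (ρR - ρL) / logMean ρL ρR
        + (1 + 1 / ((Γ - 1) * logMean (ρL / pL) (ρR / pR))) * (ρR / pR - ρL / pL) := by
  have hΓ1 : Γ - 1 ≠ 0 := sub_ne_zero.mpr hΓ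
  have hz := log_sub_log_eq_div_logMean (ρL / pL) (ρR / pR)
  rw [log_div hρR hpR, log_div hρL hpL] at hz
  have hsplit : ∀ L Δ : ℝ, (1 + 1 / ((Γ - 1) * L)) * Δ = Δ + Δ / L / (Γ - 1) := by
    intro L Δ
    simp only [one_div, mul_inv]
    ring
  rw [← log_sub_log_eq_div_logMean, hsplit, ← hz]
  field_simp
  ring

theorem lorentzFactor_sub_lorentzFactor {u v : ℝ} (hu : u ^ 2 < 1) (hv : v ^ 2 < 1) :
    1 / √(1 - v ^ 2) - 1 / √(1 - u ^ 2)
      = (u + v) / (√(1 - u ^ 2) * √(1 - v ^ 2) * (√(1 - u ^ 2) + √(1 - v ^ 2))) * (v - u) := by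
  have hsu : 0 < √(1 - u ^ 2) := sqrt_pos.mpr (by linarith)
  have hsv : 0 < √(1 - v ^ 2) := sqrt_pos.mpr (by linarith)
  have hsu2 : √(1 - u ^ 2) ^ 2 = 1 - u ^ 2 := sq_sqrt (by linarith)
  have hsv2 : √(1 - v ^ 2) ^ 2 = 1 - v ^ 2 := sq_sqrt (by linarith)
  field_simp
  linear_combination hsu2 - hsv2

/-- Cramer's rule for the system that matches the coefficients of `[[z₂]]` and `[[u]]`. -/
theorem flux_solves_jump_system {mz1 mz2 mz3 mW muW LM K Q F2 F3 : ℝ}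
    (hQ : Q = mz2 * mW ^ 2 + mz2 * mz3 * mW * LM - mz2 * muW * LM) (hQ0 : Q ≠ 0)
    (hF2 : F2 = Q⁻¹ * (K * mz2 * LM + mz1 * mW ^ 2 + mz1 * mz3 * mW * LM))
    (hF3 : F3 = Q⁻¹ * (mz1 * mW * muW + mz1 * mz3 * muW * LM
      + K * (mz2 * mW + mz2 * mz3 * LM))) :
    K + muW * F2 - mW * F3 = 0 ∧
      mz2 * (mz3 * LM + mW) * F2 - mz2 * LM * F3 = mz1 * (mz3 * LM + mW) := by
  subst hF2 hF3
  constructor <;> field_simp <;> rw [hQ] <;> ring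

theorem ec_flux_tadmor_general (Γ ρL uL pL ρR uR pR : ℝ)
    (hΓ : 1 < Γ)
    (hρL : 0 < ρL) (hρR : 0 < ρR) (hpL : 0 < pL) (hpR : 0 < pR)
    (huL : |uL| < 1) (huR : |uR| < 1)
    (WL WR LM mz1 mz2 mz3 mW muW lnz1 lnz2 F1 Q F2 F3 : ℝ)
    (hWL : WL = 1 / Real.sqrt (1 - uL ^ 2))
    (hWR : WR = 1 / Real.sqrt (1 - uR ^ 2))
    -- Lorentz mean of z₃ = u
    (hLM : LM = (uL + uR) /
      (Real.sqrt (1 - uL ^ 2) * Real.sqrt (1 - uR ^ 2) *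
        (Real.sqrt (1 - uL ^ 2) + Real.sqrt (1 - uR ^ 2))))
    -- arithmetic means
    (hmz1 : mz1 = (ρL + ρR) / 2)
    (hmz2 : mz2 = (ρL / pL + ρR / pR) / 2)
    (hmz3 : mz3 = (uL + uR) / 2)
    (hmW : mW = (WL + WR) / 2)
    (hmuW : muW = (uL * WL + uR * WR) / 2)
    -- logarithmic means
    (hlnz1 : lnz1 = logMean ρL ρR)
    (hlnz2 : lnz2 = logMean (ρL / pL) (ρR / pR))
    -- the entropy conservative flux
    (hF1 : F1 = lnz1 * muW)
    (hQ : Q = mz2 * mW ^ 2 + mz2 * mz3 * mW * LM - mz2 * muW * LM)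
    (hF2 : F2 = Q⁻¹ * ((1 + 1 / ((Γ - 1) * lnz2)) * mz2 * LM * F1
      + mz1 * mW ^ 2 + mz1 * mz3 * mW * LM))
    (hF3 : F3 = Q⁻¹ * (mz1 * mW * muW + mz1 * mz3 * muW * LM
      + (1 + 1 / ((Γ - 1) * lnz2)) * F1 * (mz2 * mW + mz2 * mz3 * LM))) :
    (((Γ - (Real.log pR - Γ * Real.log ρR)) / (Γ - 1) + ρR / pR)
        - ((Γ - (Real.log pL - Γ * Real.log ρL)) / (Γ - 1) + ρL / pL)) * F1
      + (ρR * WR * uR / pR - ρL * WL * uL / pL) * F2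
      + ((-(ρR * WR) / pR) - (-(ρL * WL) / pL)) * F3
      = ρR * uR * WR - ρL * uL * WL := by
  have huL2 := (sq_lt_one_iff_abs_lt_one uL).mpr huL
  have huR2 := (sq_lt_one_iff_abs_lt_one uR).mpr huR
  have hjumpW : WR - WL = LM * (uR - uL) := by
    rw [hWL, hWR, hLM]
    exact lorentzFactor_sub_lorentzFactor huL2 huR2
  have hWL0 : 0 < WL := hWL ▸ one_div_pos.mpr (sqrt_pos.mpr (by linarith))
  have hWR0 : 0 < WR := hWR ▸ one_div_pos.mpr (sqrt_pos.mpr (by linarith))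
  have hQ_eq : Q = mz2 * (WL * WR) := by
    rw [hQ, hmW, hmuW, hmz3]
    linear_combination (mz2 * (WR - WL) / 4) * hjumpW
  have hQ0 : Q ≠ 0 := by
    rw [hQ_eq, hmz2]
    positivity
  obtain ⟨hcoeff_z2, hcoeff_u⟩ := flux_solves_jump_system (F2 := F2) (F3 := F3)
    (K := (1 + 1 / ((Γ - 1) * lnz2)) * F1)
    hQ hQ0 (by rw [hF2]; ring) hF3
  have hcancel : (ρR - ρL) / lnz1 * lnz1 = ρR - ρL :=
    div_mul_cancel₀ _ (hlnz1 ▸ (logMean_pos hρL hρR).ne')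
  rw [entropyVariable_jump hΓ.ne' hρL.ne' hρR.ne' hpL.ne' hpR.ne', ← hlnz1, ← hlnz2]
  subst hmz1 hmz2 hmz3 hmW hmuW hF1
  -- discrete product rule for `[[V₂]]`, `[[V₃]]`, `[[ψ]]`, with `[[W]]` traded for `⟨⟨u⟩⟩_L [[u]]`
  linear_combination (ρR / pR - ρL / pL) * hcoeff_z2 + (uR - uL) * hcoeff_u
    + (uL * WL + uR * WR) / 2 * hcancel
    + ((ρL / pL + ρR / pR) / 2 * ((uL + uR) / 2) * F2 - (ρL / pL + ρR / pR) / 2 * F3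
      - (ρL + ρR) / 2 * ((uL + uR) / 2)) * hjumpW

/-- Tadmor's entropy conservation condition `[[V]]ᵀ F̃ = [[ψ]]` for the 1D
entropy conservative flux of special RHD, for any pair of admissible states. -/
theorem ec_flux_tadmor (Γ ρL uL pL ρR uR pR : ℝ)
    (hΓ : 1 < Γ) (hΓ2 : Γ ≤ 2)
    (hρL : 0 < ρL) (hρR : 0 < ρR) (hpL : 0 < pL) (hpR : 0 < pR)
    (huL : |uL| < 1) (huR : |uR| < 1)
    (WL WR LM mz1 mz2 mz3 mW muW lnz1 lnz2 F1 Q F2 F3 : ℝ)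
    (hWL : WL = 1 / Real.sqrt (1 - uL ^ 2))
    (hWR : WR = 1 / Real.sqrt (1 - uR ^ 2))
    -- Lorentz mean of z₃ = u
    (hLM : LM = (uL + uR) /
      (Real.sqrt (1 - uL ^ 2) * Real.sqrt (1 - uR ^ 2) *
        (Real.sqrt (1 - uL ^ 2) + Real.sqrt (1 - uR ^ 2))))
    -- arithmetic means
    (hmz1 : mz1 = (ρL + ρR) / 2)
    (hmz2 : mz2 = (ρL / pL + ρR / pR) / 2)
    (hmz3 : mz3 = (uL + uR) / 2)
    (hmW : mW = (WL + WR) / 2)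
    (hmuW : muW = (uL * WL + uR * WR) / 2)
    -- logarithmic means
    (hlnz1 : lnz1 = logMean ρL ρR)
    (hlnz2 : lnz2 = logMean (ρL / pL) (ρR / pR))
    -- the entropy conservative flux
    (hF1 : F1 = lnz1 * muW)
    (hQ : Q = mz2 * mW ^ 2 + mz2 * mz3 * mW * LM - mz2 * muW * LM)
    (hF2 : F2 = Q⁻¹ * ((1 + 1 / ((Γ - 1) * lnz2)) * mz2 * LM * F1
      + mz1 * mW ^ 2 + mz1 * mz3 * mW * LM))
    (hF3 : F3 = Q⁻¹ * (mz1 * mW * muW + mz1 * mz3 * muW * LM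
      + (1 + 1 / ((Γ - 1) * lnz2)) * F1 * (mz2 * mW + mz2 * mz3 * LM))) :
    (((Γ - (Real.log pR - Γ * Real.log ρR)) / (Γ - 1) + ρR / pR)
        - ((Γ - (Real.log pL - Γ * Real.log ρL)) / (Γ - 1) + ρL / pL)) * F1
      + (ρR * WR * uR / pR - ρL * WL * uL / pL) * F2
      + ((-(ρR * WR) / pR) - (-(ρL * WL) / pL)) * F3
      = ρR * uR * WR - ρL * uL * WL :=
  ec_flux_tadmor_general Γ ρL uL pL ρR uR pR hΓ hρL hρR hpL hpR huL huR WL WR LM mz1 mz2 mz3 mW muW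
    lnz1 lnz2 F1 Q F2 F3 hWL hWR hLM hmz1 hmz2 hmz3 hmW hmuW hlnz1 hlnz2 hF1 hQ hF2 hF3
end

section
/- For the two-dimensional entropy conservative flux in the x-direction with parameter vector z = (ρ, ρ/p, u, v): when the left and right states coincide, F̃₁ = ρuW, F̃₂ = ρhW²u² + p, F̃₃ = ρhW²uv, and F̃₄ = ρhW²u, where W = 1/√(1-u²-v²) and h = 1 + Γp/((Γ-1)ρ); i.e., the flux is consistent with F = (Du, m_x u + p, m_y u, m_x) with D = ρW, m_x = ρhW²u, m_y = ρhW²v. -/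
/-!
At equal states the Lorentz means are `uW³` and `vW³`, so the bracket in `Q` cancels and
`Q = (ρ/p) W²`. After dividing by `Q`, the momentum components reduce to
`(αρ + p) W² u² + p` and `(αρ + p) W² uv`, and the choice of `α` is exactly what makes
`αρ + p = ρh`. The energy component then follows from `W² (1 - u² - v²) = 1`.
-/

lemma sq_one_div_sqrt_mul_self {s : ℝ} (hs : 0 < s) : (1 / Real.sqrt s) ^ 2 * s = 1 := by
  rw [div_pow, one_pow, Real.sq_sqrt hs.le, one_div_mul_cancel hs.ne']

lemma alpha_mul_add_eq_mul_enthalpy {Γ ρ p : ℝ} (hΓ : Γ ≠ 1) (hρ : ρ ≠ 0) :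
    (1 + 1 / ((Γ - 1) * (ρ / p))) * ρ + p = ρ * (1 + Γ * p / ((Γ - 1) * ρ)) := by
  have : Γ - 1 ≠ 0 := sub_ne_zero.mpr hΓ
  field_simp
  ring

section EqualStates

variable {ρ p u v W α h : ℝ}

lemma ecFlux_xMomentum_eq (hρ : ρ ≠ 0) (hp : p ≠ 0) (hW : W ≠ 0)
    (hαh : α * ρ + p = ρ * h) :
    (ρ / p * W ^ 2)⁻¹ * (α * (ρ / p) * (u * W ^ 3) * (ρ * (u * W))
      + ρ * (W ^ 2 - v * W * (v * W ^ 3)) + ρ * W * (u * (u * W ^ 3) + v * (v * W ^ 3)))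
      = ρ * h * W ^ 2 * u ^ 2 + p := by
  rw [inv_mul_eq_iff_eq_mul₀ (by positivity)]
  field_simp
  linear_combination (u ^ 2 * W ^ 2) * hαh

lemma ecFlux_yMomentum_eq (hρ : ρ ≠ 0) (hp : p ≠ 0) (hW : W ≠ 0)
    (hαh : α * ρ + p = ρ * h) :
    (ρ / p * W ^ 2)⁻¹ * (α * (ρ / p) * (v * W ^ 3) * (ρ * (u * W)) + ρ * (u * W) * (v * W ^ 3))
      = ρ * h * W ^ 2 * u * v := by
  rw [inv_mul_eq_iff_eq_mul₀ (by positivity)]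
  field_simp
  linear_combination (u * v) * hαh

lemma ecFlux_energy_eq (hW : W ≠ 0) (hW2 : W ^ 2 * (1 - u ^ 2 - v ^ 2) = 1)
    (hαh : α * ρ + p = ρ * h) :
    W⁻¹ * (α * (ρ * (u * W)) + u * W * (ρ * h * W ^ 2 * u ^ 2 + p)
      + v * W * (ρ * h * W ^ 2 * u * v)) = ρ * h * W ^ 2 * u := by
  rw [inv_mul_eq_iff_eq_mul₀ hW]
  linear_combination (u * W) * hαh - (ρ * h * u * W) * hW2

end EqualStates

theorem ec_flux2D_consistent_general (Γ ρ u v p : ℝ)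
    (hΓ : 1 < Γ) (hρ : 0 < ρ) (hp : 0 < p)
    (huv : u ^ 2 + v ^ 2 < 1)
    (W h Lx Ly z1 z2 α F1 Q F2 F3 F4 : ℝ)
    (hW : W = 1 / Real.sqrt (1 - u ^ 2 - v ^ 2))
    (hh : h = 1 + Γ * p / ((Γ - 1) * ρ))
    -- the Lorentz means at equal states
    (hLx : Lx = u * W ^ 3) (hLy : Ly = v * W ^ 3)
    -- arithmetic and logarithmic means of z₁ = ρ, z₂ = ρ/p at equal states
    (hz1 : z1 = ρ) (hz2 : z2 = ρ / p)
    (hα : α = 1 + 1 / ((Γ - 1) * z2))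
    (hF1 : F1 = z1 * (u * W))
    (hQ : Q = z2 * W ^ 2
      + z2 * (u * W * Lx - (u * W) * Lx + v * W * Ly - (v * W) * Ly))
    (hF2 : F2 = Q⁻¹ * (α * z2 * Lx * F1
      + z1 * (W ^ 2 - (v * W) * Ly) + z1 * W * (u * Lx + v * Ly)))
    (hF3 : F3 = Q⁻¹ * (α * z2 * Ly * F1 + z1 * (u * W) * Ly))
    (hF4 : F4 = W⁻¹ * (α * F1 + (u * W) * F2 + (v * W) * F3)) :
    F1 = ρ * u * W ∧
    F2 = ρ * h * W ^ 2 * u ^ 2 + p ∧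
    F3 = ρ * h * W ^ 2 * u * v ∧
    F4 = ρ * h * W ^ 2 * u := by
  have hW2 : W ^ 2 * (1 - u ^ 2 - v ^ 2) = 1 := hW ▸ sq_one_div_sqrt_mul_self (by linarith)
  have hW0 : W ≠ 0 := by rintro rfl; simp at hW2
  have hαh : α * ρ + p = ρ * h := by
    rw [hα, hh, hz2]
    exact alpha_mul_add_eq_mul_enthalpy hΓ.ne' hρ.ne'
  have hQ' : Q = ρ / p * W ^ 2 := by rw [hQ, hz2]; ring
  subst z1 z2 Lx Ly F1 Q
  have hF2' : F2 = ρ * h * W ^ 2 * u ^ 2 + p :=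
    hF2.trans (ecFlux_xMomentum_eq hρ.ne' hp.ne' hW0 hαh)
  have hF3' : F3 = ρ * h * W ^ 2 * u * v :=
    hF3.trans (ecFlux_yMomentum_eq hρ.ne' hp.ne' hW0 hαh)
  refine ⟨by ring, hF2', hF3', ?_⟩
  rw [hF4, hF2', hF3']
  exact ecFlux_energy_eq hW0 hW2 hαh

/-- Consistency of the 2D `x`-direction entropy conservative flux: when the left
and right states coincide with `(ρ,u,v,p)` (so all means collapse and the
Lorentz means become `uW³`, `vW³`), the flux components equal
`(ρuW, ρhW²u² + p, ρhW²uv, ρhW²u)`. -/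
theorem ec_flux2D_consistent (Γ ρ u v p : ℝ)
    (hΓ : 1 < Γ) (hΓ2 : Γ ≤ 2) (hρ : 0 < ρ) (hp : 0 < p)
    (huv : u ^ 2 + v ^ 2 < 1)
    (W h Lx Ly z1 z2 α F1 Q F2 F3 F4 : ℝ)
    (hW : W = 1 / Real.sqrt (1 - u ^ 2 - v ^ 2))
    (hh : h = 1 + Γ * p / ((Γ - 1) * ρ))
    -- the Lorentz means at equal states
    (hLx : Lx = u * W ^ 3) (hLy : Ly = v * W ^ 3)
    -- arithmetic and logarithmic means of z₁ = ρ, z₂ = ρ/p at equal states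
    (hz1 : z1 = ρ) (hz2 : z2 = ρ / p)
    (hα : α = 1 + 1 / ((Γ - 1) * z2))
    (hF1 : F1 = z1 * (u * W))
    (hQ : Q = z2 * W ^ 2
      + z2 * (u * W * Lx - (u * W) * Lx + v * W * Ly - (v * W) * Ly))
    (hF2 : F2 = Q⁻¹ * (α * z2 * Lx * F1
      + z1 * (W ^ 2 - (v * W) * Ly) + z1 * W * (u * Lx + v * Ly)))
    (hF3 : F3 = Q⁻¹ * (α * z2 * Ly * F1 + z1 * (u * W) * Ly))
    (hF4 : F4 = W⁻¹ * (α * F1 + (u * W) * F2 + (v * W) * F3)) :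
    F1 = ρ * u * W ∧
    F2 = ρ * h * W ^ 2 * u ^ 2 + p ∧
    F3 = ρ * h * W ^ 2 * u * v ∧
    F4 = ρ * h * W ^ 2 * u :=
  ec_flux2D_consistent_general Γ ρ u v p hΓ hρ hp huv W h Lx Ly z1 z2 α F1 Q F2 F3 F4 hW hh hLx hLy
    hz1 hz2 hα hF1 hQ hF2 hF3 hF4
end

section
/- For the two-dimensional special RHD equations with U = (ρW, ρhW²u, ρhW²v, ρhW² - p), entropy variables V = ((Γ-S)/(Γ-1) + ρ/p, ρWu/p, ρWv/p, -ρW/p)ᵀ, fluxes F = (ρWu, ρhW²u² + p, ρhW²uv, ρhW²u) and G = (ρWv, ρhW²uv, ρhW²v² + p, ρhW²v), and entropy fluxes q_x = -ρuWS/(Γ-1), q_y = -ρvWS/(Γ-1), the potentials satisfy ψ_x := VᵀF - q_x = ρuW and ψ_y := VᵀG - q_y = ρvW. -/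
/-!
Contracted with the flux `F`, the momentum and energy components of the entropy variables
combine into `ρ W u · ρ h W² (u² + v² - 1) / p`. The Lorentz identity
`W² (1 - u² - v²) = 1` turns this into `-ρ W u · ρ h / p`, and the enthalpy relation
`ρ h = ρ + Γ p / (Γ - 1)` cancels it against the remaining terms, while the entropy `S` cancels
against the entropy flux. The `y`-potential is the `x`-potential with `u` and `v` exchanged.
-/

open Real

theorem lorentz_factor_sq_mul {u v W : ℝ} (huv : u ^ 2 + v ^ 2 < 1)
    (hW : W = 1 / √(1 - u ^ 2 - v ^ 2)) : W ^ 2 * (1 - u ^ 2 - v ^ 2) = 1 := by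
  have hpos : 0 < 1 - u ^ 2 - v ^ 2 := by linarith
  rw [hW, div_pow, one_pow, sq_sqrt hpos.le, one_div_mul_cancel hpos.ne']

theorem entropy_potential_eq {Γ ρ p u v W h S : ℝ} (hΓ : Γ ≠ 1) (hp : p ≠ 0)
    (hW : W ^ 2 * (1 - u ^ 2 - v ^ 2) = 1) (hh : ρ * h = ρ + Γ * p / (Γ - 1)) :
    ((Γ - S) / (Γ - 1) + ρ / p) * (ρ * W * u)
        + (ρ * W * u / p) * (ρ * h * W ^ 2 * u ^ 2 + p)
        + (ρ * W * v / p) * (ρ * h * W ^ 2 * u * v)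
        + (-(ρ * W) / p) * (ρ * h * W ^ 2 * u)
        - (-(ρ * u * W * S) / (Γ - 1)) = ρ * u * W := by
  have hΓ' : Γ - 1 ≠ 0 := sub_ne_zero.mpr hΓ
  calc _ = ρ * W * u * (1 + Γ / (Γ - 1) + (ρ - ρ * h * (W ^ 2 * (1 - u ^ 2 - v ^ 2))) / p) := by
          field_simp; ring
    _ = ρ * u * W := by
          rw [hW, mul_one, hh]; field_simp; ring

theorem potentials_2D_general (Γ ρ u v p : ℝ)
    (hΓ : 1 < Γ) (hρ : 0 < ρ) (hp : 0 < p)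
    (huv : u ^ 2 + v ^ 2 < 1)
    (W h S : ℝ)
    (hW : W = 1 / Real.sqrt (1 - u ^ 2 - v ^ 2))
    (hh : h = 1 + Γ * p / ((Γ - 1) * ρ)) :
    ((Γ - S) / (Γ - 1) + ρ / p) * (ρ * W * u)
        + (ρ * W * u / p) * (ρ * h * W ^ 2 * u ^ 2 + p)
        + (ρ * W * v / p) * (ρ * h * W ^ 2 * u * v)
        + (-(ρ * W) / p) * (ρ * h * W ^ 2 * u)
        - (-(ρ * u * W * S) / (Γ - 1)) = ρ * u * W ∧
    ((Γ - S) / (Γ - 1) + ρ / p) * (ρ * W * v)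
        + (ρ * W * u / p) * (ρ * h * W ^ 2 * u * v)
        + (ρ * W * v / p) * (ρ * h * W ^ 2 * v ^ 2 + p)
        + (-(ρ * W) / p) * (ρ * h * W ^ 2 * v)
        - (-(ρ * v * W * S) / (Γ - 1)) = ρ * v * W := by
  have hLorentz := lorentz_factor_sq_mul huv hW
  have hρh : ρ * h = ρ + Γ * p / (Γ - 1) := by
    rw [hh]; field_simp
  have hLorentz' : W ^ 2 * (1 - v ^ 2 - u ^ 2) = 1 := by linear_combination hLorentz
  refine ⟨entropy_potential_eq hΓ.ne' hp.ne' hLorentz hρh, ?_⟩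
  linear_combination entropy_potential_eq (S := S) hΓ.ne' hp.ne' hLorentz' hρh

/-- For 2D special RHD, the potentials satisfy `ψ_x = VᵀF - q_x = ρuW` and
`ψ_y = VᵀG - q_y = ρvW`. -/
theorem potentials_2D (Γ ρ u v p : ℝ)
    (hΓ : 1 < Γ) (hΓ2 : Γ ≤ 2) (hρ : 0 < ρ) (hp : 0 < p)
    (huv : u ^ 2 + v ^ 2 < 1)
    (W h S : ℝ)
    (hW : W = 1 / Real.sqrt (1 - u ^ 2 - v ^ 2))
    (hh : h = 1 + Γ * p / ((Γ - 1) * ρ))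
    (hS : S = Real.log p - Γ * Real.log ρ) :
    ((Γ - S) / (Γ - 1) + ρ / p) * (ρ * W * u)
        + (ρ * W * u / p) * (ρ * h * W ^ 2 * u ^ 2 + p)
        + (ρ * W * v / p) * (ρ * h * W ^ 2 * u * v)
        + (-(ρ * W) / p) * (ρ * h * W ^ 2 * u)
        - (-(ρ * u * W * S) / (Γ - 1)) = ρ * u * W ∧
    ((Γ - S) / (Γ - 1) + ρ / p) * (ρ * W * v)
        + (ρ * W * u / p) * (ρ * h * W ^ 2 * u * v)
        + (ρ * W * v / p) * (ρ * h * W ^ 2 * v ^ 2 + p)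
        + (-(ρ * W) / p) * (ρ * h * W ^ 2 * v)
        - (-(ρ * v * W * S) / (Γ - 1)) = ρ * v * W :=
  potentials_2D_general Γ ρ u v p hΓ hρ hp huv W h S hW hh
end

section
/- For smooth solutions of the 1D special RHD equations ∂_t U + ∂_x F(U) = 0 with ideal EOS, the thermodynamic entropy S = ln p - Γ ln ρ satisfies the additional conservation law ∂_t(ρWS) + ∂_x(ρuWS) = 0; consequently η = -ρWS/(Γ-1), q = -ρuWS/(Γ-1) form an entropy pair satisfying q'(U) = Vᵀ F'(U) with V = η'(U)ᵀ. -/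
set_option maxHeartbeats 1000000


open Real

/-- Partial derivative in `t` of a function of `(t, x)`. -/
noncomputable def pT (f : ℝ → ℝ → ℝ) (t x : ℝ) : ℝ := deriv (fun s => f s x) t

/-- Partial derivative in `x` of a function of `(t, x)`. -/
noncomputable def pX (f : ℝ → ℝ → ℝ) (t x : ℝ) : ℝ := deriv (fun y => f t y) x

lemma d_W {V : ℝ → ℝ} {τ vd v w : ℝ} (hV : HasDerivAt V vd τ)
    (hv : V τ = v) (hw : w = Real.sqrt (1 - v^2)) (hb : 0 < 1 - v^2) :
    HasDerivAt (fun s => 1 / Real.sqrt (1 - V s ^ 2)) (v*vd/w^3) τ := by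
  subst hv hw
  have hs : Real.sqrt (1 - V τ^2) ≠ 0 := (Real.sqrt_pos.mpr hb).ne'
  have hw2 : Real.sqrt (1 - V τ ^ 2)^2 = 1 - V τ ^ 2 := Real.sq_sqrt (by nlinarith)
  have c1 : HasDerivAt (fun s => 1 - V s ^ 2) (-((2:ℕ) * V τ ^ (2-1) * vd)) τ :=
    (hV.pow 2).const_sub 1
  have c2 := c1.sqrt hb.ne'
  have c3 := (hasDerivAt_const τ (1:ℝ)).div c2 hs
  refine c3.congr_deriv (Eq.symm ?_)
  field_simp
  ring

lemma d_E1 {R V : ℝ → ℝ} {τ rd vd r v w : ℝ}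
    (hR : HasDerivAt R rd τ) (hV : HasDerivAt V vd τ)
    (hr : R τ = r) (hv : V τ = v) (hw : w = Real.sqrt (1 - v^2)) (hb : 0 < 1 - v^2) :
    HasDerivAt (fun s => R s * (1 / Real.sqrt (1 - V s ^ 2)))
      ((rd*w^2 + r*v*vd)/w^3) τ := by
  have hW' := d_W hV hv hw hb
  have c := hR.mul hW'
  subst hr hv hw
  have hs : Real.sqrt (1 - V τ^2) ≠ 0 := (Real.sqrt_pos.mpr hb).ne'
  have hw2 : Real.sqrt (1 - V τ ^ 2)^2 = 1 - V τ ^ 2 := Real.sq_sqrt (by nlinarith)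
  refine c.congr_deriv (Eq.symm ?_)
  field_simp

lemma d_E2 {R V : ℝ → ℝ} {τ rd vd r v w : ℝ}
    (hR : HasDerivAt R rd τ) (hV : HasDerivAt V vd τ)
    (hr : R τ = r) (hv : V τ = v) (hw : w = Real.sqrt (1 - v^2)) (hb : 0 < 1 - v^2) :
    HasDerivAt (fun s => R s * (1 / Real.sqrt (1 - V s ^ 2)) * V s)
      (((rd*v + r*vd)*w^2 + r*v^2*vd)/w^3) τ := by
  have hW' := d_W hV hv hw hb
  have c := (hR.mul hW').mul hV
  subst hr hv hw
  have hs : Real.sqrt (1 - V τ^2) ≠ 0 := (Real.sqrt_pos.mpr hb).ne'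
  have hw2 : Real.sqrt (1 - V τ ^ 2)^2 = 1 - V τ ^ 2 := Real.sq_sqrt (by nlinarith)
  refine c.congr_deriv (Eq.symm ?_)
  simp only [Pi.mul_apply, Pi.div_apply, Pi.pow_apply, Pi.add_apply, Pi.sub_apply]
  field_simp
  ring

lemma d_E3 {R V Q : ℝ → ℝ} {τ rd vd qd Γ r v q w : ℝ}
    (hR : HasDerivAt R rd τ) (hV : HasDerivAt V vd τ) (hQ : HasDerivAt Q qd τ)
    (hr : R τ = r) (hv : V τ = v) (hq : Q τ = q)
    (hw : w = Real.sqrt (1 - v^2)) (hb : 0 < 1 - v^2)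
    (hrpos : 0 < r) (hG : Γ - 1 ≠ 0) :
    HasDerivAt (fun s => R s * (1 + Γ * Q s / ((Γ-1) * R s))
        * (1 / Real.sqrt (1 - V s ^ 2)) ^ 2 * V s)
      (((Γ-1)*rd + Γ*qd)*v/((Γ-1)*w^2)
        + ((Γ-1)*r + Γ*q)*(2*v^2*vd)/((Γ-1)*w^4)
        + ((Γ-1)*r + Γ*q)*vd/((Γ-1)*w^2)) τ := by
  have hW' := d_W hV hv hw hb
  subst hr hv hq hw
  have hne : (Γ-1) * R τ ≠ 0 := mul_ne_zero hG hrpos.ne'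
  have hH := ((hQ.const_mul Γ).div (hR.const_mul (Γ-1)) hne).const_add 1
  have c := ((hR.mul hH).mul (hW'.pow 2)).mul hV
  have hs : Real.sqrt (1 - V τ^2) ≠ 0 := (Real.sqrt_pos.mpr hb).ne'
  refine c.congr_deriv (Eq.symm ?_)
  simp only [Pi.mul_apply, Pi.div_apply, Pi.pow_apply, Pi.add_apply, Pi.sub_apply]
  norm_num
  field_simp
  ring

lemma d_E4 {R V Q : ℝ → ℝ} {τ rd vd qd Γ r v q w : ℝ}
    (hR : HasDerivAt R rd τ) (hV : HasDerivAt V vd τ) (hQ : HasDerivAt Q qd τ)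
    (hr : R τ = r) (hv : V τ = v) (hq : Q τ = q)
    (hw : w = Real.sqrt (1 - v^2)) (hb : 0 < 1 - v^2)
    (hrpos : 0 < r) (hG : Γ - 1 ≠ 0) :
    HasDerivAt (fun s => R s * (1 + Γ * Q s / ((Γ-1) * R s))
        * (1 / Real.sqrt (1 - V s ^ 2)) ^ 2 * V s ^ 2 + Q s)
      (v*(((Γ-1)*rd + Γ*qd)*v/((Γ-1)*w^2)
        + ((Γ-1)*r + Γ*q)*(2*v^2*vd)/((Γ-1)*w^4)
        + ((Γ-1)*r + Γ*q)*vd/((Γ-1)*w^2))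
        + ((Γ-1)*r + Γ*q)*v*vd/((Γ-1)*w^2) + qd) τ := by
  have hW' := d_W hV hv hw hb
  subst hr hv hq hw
  have hne : (Γ-1) * R τ ≠ 0 := mul_ne_zero hG hrpos.ne'
  have hH := ((hQ.const_mul Γ).div (hR.const_mul (Γ-1)) hne).const_add 1
  have c := (((hR.mul hH).mul (hW'.pow 2)).mul (hV.pow 2)).add hQ
  have hs : Real.sqrt (1 - V τ^2) ≠ 0 := (Real.sqrt_pos.mpr hb).ne'
  refine c.congr_deriv (Eq.symm ?_)
  simp only [Pi.mul_apply, Pi.div_apply, Pi.pow_apply, Pi.add_apply, Pi.sub_apply]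
  norm_num
  field_simp
  ring

lemma d_E5 {R V Q : ℝ → ℝ} {τ rd vd qd Γ r v q w : ℝ}
    (hR : HasDerivAt R rd τ) (hV : HasDerivAt V vd τ) (hQ : HasDerivAt Q qd τ)
    (hr : R τ = r) (hv : V τ = v) (hq : Q τ = q)
    (hw : w = Real.sqrt (1 - v^2)) (hb : 0 < 1 - v^2)
    (hrpos : 0 < r) (hG : Γ - 1 ≠ 0) :
    HasDerivAt (fun s => R s * (1 + Γ * Q s / ((Γ-1) * R s))
        * (1 / Real.sqrt (1 - V s ^ 2)) ^ 2 - Q s)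
      (((Γ-1)*rd + Γ*qd)/((Γ-1)*w^2)
        + ((Γ-1)*r + Γ*q)*(2*v*vd)/((Γ-1)*w^4) - qd) τ := by
  have hW' := d_W hV hv hw hb
  subst hr hv hq hw
  have hne : (Γ-1) * R τ ≠ 0 := mul_ne_zero hG hrpos.ne'
  have hH := ((hQ.const_mul Γ).div (hR.const_mul (Γ-1)) hne).const_add 1
  have c := ((hR.mul hH).mul (hW'.pow 2)).sub hQ
  have hs : Real.sqrt (1 - V τ^2) ≠ 0 := (Real.sqrt_pos.mpr hb).ne'
  refine c.congr_deriv (Eq.symm ?_)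
  simp only [Pi.mul_apply, Pi.div_apply, Pi.pow_apply, Pi.add_apply, Pi.sub_apply]
  norm_num
  field_simp
  ring

lemma d_E7 {R V Q : ℝ → ℝ} {τ rd vd qd Γ r v q w : ℝ}
    (hR : HasDerivAt R rd τ) (hV : HasDerivAt V vd τ) (hQ : HasDerivAt Q qd τ)
    (hr : R τ = r) (hv : V τ = v) (hq : Q τ = q)
    (hw : w = Real.sqrt (1 - v^2)) (hb : 0 < 1 - v^2)
    (hrpos : 0 < r) (hqpos : 0 < q) :
    HasDerivAt (fun s => R s * (1 / Real.sqrt (1 - V s ^ 2))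
        * (Real.log (Q s) - Γ * Real.log (R s)))
      (((rd*w^2 + r*v*vd)/w^3) * (Real.log q - Γ*Real.log r)
        + (r/w)*(qd/q - Γ*rd/r)) τ := by
  have hW' := d_W hV hv hw hb
  subst hr hv hq hw
  have hS' := (hQ.log hqpos.ne').sub ((hR.log hrpos.ne').const_mul Γ)
  have c := (hR.mul hW').mul hS'
  have hs : Real.sqrt (1 - V τ^2) ≠ 0 := (Real.sqrt_pos.mpr hb).ne'
  have hw2 : Real.sqrt (1 - V τ ^ 2)^2 = 1 - V τ ^ 2 := Real.sq_sqrt (by nlinarith)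
  refine c.congr_deriv (Eq.symm ?_)
  simp only [Pi.mul_apply, Pi.div_apply, Pi.pow_apply, Pi.add_apply, Pi.sub_apply]
  field_simp

lemma d_E8 {R V Q : ℝ → ℝ} {τ rd vd qd Γ r v q w : ℝ}
    (hR : HasDerivAt R rd τ) (hV : HasDerivAt V vd τ) (hQ : HasDerivAt Q qd τ)
    (hr : R τ = r) (hv : V τ = v) (hq : Q τ = q)
    (hw : w = Real.sqrt (1 - v^2)) (hb : 0 < 1 - v^2)
    (hrpos : 0 < r) (hqpos : 0 < q) :
    HasDerivAt (fun s => R s * V s * (1 / Real.sqrt (1 - V s ^ 2))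
        * (Real.log (Q s) - Γ * Real.log (R s)))
      ((((rd*v + r*vd)*w^2 + r*v^2*vd)/w^3) * (Real.log q - Γ*Real.log r)
        + (r*v/w)*(qd/q - Γ*rd/r)) τ := by
  have hW' := d_W hV hv hw hb
  subst hr hv hq hw
  have hS' := (hQ.log hqpos.ne').sub ((hR.log hrpos.ne').const_mul Γ)
  have c := ((hR.mul hV).mul hW').mul hS'
  have hs : Real.sqrt (1 - V τ^2) ≠ 0 := (Real.sqrt_pos.mpr hb).ne'
  have hw2 : Real.sqrt (1 - V τ ^ 2)^2 = 1 - V τ ^ 2 := Real.sq_sqrt (by nlinarith)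
  refine c.congr_deriv (Eq.symm ?_)
  simp only [Pi.mul_apply, Pi.div_apply, Pi.pow_apply, Pi.add_apply, Pi.sub_apply]
  field_simp

lemma hdT {f : ℝ → ℝ → ℝ} (hf : ContDiff ℝ 1 (Function.uncurry f)) (t x : ℝ) :
    HasDerivAt (fun s => f s x) (deriv (fun s => f s x) t) t := by
  have h : DifferentiableAt ℝ (fun s => f s x) t :=
    ((hf.differentiable one_ne_zero) (t, x)).comp (f := fun s => (s, x)) t ((differentiableAt_id).prodMk (differentiableAt_const x))
  exact h.hasDerivAt

lemma hdX {f : ℝ → ℝ → ℝ} (hf : ContDiff ℝ 1 (Function.uncurry f)) (t x : ℝ) :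
    HasDerivAt (fun y => f t y) (deriv (fun y => f t y) x) x := by
  have h : DifferentiableAt ℝ (fun y => f t y) x :=
    ((hf.differentiable one_ne_zero) (t, x)).comp (f := fun y => (t, y)) x ((differentiableAt_const t).prodMk (differentiableAt_id))
  exact h.hasDerivAt

/-- For C¹ solutions of the 1D special RHD equations with ideal EOS, the
thermodynamic entropy `S = ln p - Γ ln ρ` satisfies the additional conservation
law `∂_t(ρWS) + ∂_x(ρuWS) = 0`. -/
theorem entropy_conservation_smooth (Γ : ℝ) (hΓ : 1 < Γ) (hΓ2 : Γ ≤ 2)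
    (ρ u p : ℝ → ℝ → ℝ)
    (hρ : ContDiff ℝ 1 (Function.uncurry ρ))
    (hu : ContDiff ℝ 1 (Function.uncurry u))
    (hp : ContDiff ℝ 1 (Function.uncurry p))
    (hρpos : ∀ t x, 0 < ρ t x) (hppos : ∀ t x, 0 < p t x)
    (hub : ∀ t x, |u t x| < 1)
    (W h S : ℝ → ℝ → ℝ)
    (hW : ∀ t x, W t x = 1 / Real.sqrt (1 - (u t x) ^ 2))
    (hh : ∀ t x, h t x = 1 + Γ * p t x / ((Γ - 1) * ρ t x))
    (hS : ∀ t x, S t x = Real.log (p t x) - Γ * Real.log (ρ t x))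
    -- the three conservation laws
    (law1 : ∀ t x, pT (fun t x => ρ t x * W t x) t x
      + pX (fun t x => ρ t x * W t x * u t x) t x = 0)
    (law2 : ∀ t x, pT (fun t x => ρ t x * h t x * (W t x) ^ 2 * u t x) t x
      + pX (fun t x => ρ t x * h t x * (W t x) ^ 2 * (u t x) ^ 2 + p t x) t x = 0)
    (law3 : ∀ t x, pT (fun t x => ρ t x * h t x * (W t x) ^ 2 - p t x) t x
      + pX (fun t x => ρ t x * h t x * (W t x) ^ 2 * u t x) t x = 0) :
    ∀ t x, pT (fun t x => ρ t x * W t x * S t x) t x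
      + pX (fun t x => ρ t x * u t x * W t x * S t x) t x = 0 := by
  intro t x
  have Hrt := hdT hρ t x
  have Hvt := hdT hu t x
  have Hqt := hdT hp t x
  have Hrx := hdX hρ t x
  have Hvx := hdX hu t x
  have Hqx := hdX hp t x
  have hb : 0 < 1 - u t x ^ 2 := by
    have h1 := abs_lt.mp (hub t x); nlinarith
  have hrpos := hρpos t x
  have hqpos := hppos t x
  have hG : Γ - 1 ≠ 0 := ne_of_gt (by linarith)
  have A1 := law1 t x
  have A2 := law2 t x
  have A3 := law3 t x
  simp only [pT, pX, hW, hh, hS] at A1 A2 A3 ⊢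
  rw [(d_E1 Hrt Hvt rfl rfl rfl hb).deriv, (d_E2 Hrx Hvx rfl rfl rfl hb).deriv] at A1
  rw [(d_E3 Hrt Hvt Hqt rfl rfl rfl rfl hb hrpos hG).deriv,
      (d_E4 Hrx Hvx Hqx rfl rfl rfl rfl hb hrpos hG).deriv] at A2
  rw [(d_E5 Hrt Hvt Hqt rfl rfl rfl rfl hb hrpos hG).deriv,
      (d_E3 Hrx Hvx Hqx rfl rfl rfl rfl hb hrpos hG).deriv] at A3
  rw [(d_E7 Hrt Hvt Hqt rfl rfl rfl rfl hb hrpos hqpos).deriv,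
      (d_E8 Hrx Hvx Hqx rfl rfl rfl rfl hb hrpos hqpos).deriv]
  set rt := deriv (fun s => ρ s x) t with hrt
  set vt := deriv (fun s => u s x) t with hvt
  set qt := deriv (fun s => p s x) t with hqt
  set rx := deriv (fun y => ρ t y) x with hrx
  set vx := deriv (fun y => u t y) x with hvx
  set qx := deriv (fun y => p t y) x with hqx
  set r := ρ t x with hr
  set v := u t x with hv
  set q := p t x with hq
  set w := Real.sqrt (1 - v ^ 2) with hwd
  have hw2 : w^2 = 1 - v^2 := Real.sq_sqrt hb.le
  have hwpos : 0 < w := Real.sqrt_pos.mpr hb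
  have hwne := hwpos.ne'
  have hrne := hrpos.ne'
  have hqne := hqpos.ne'
  have hw4 : w^4 = (1-v^2)^2 := by rw [← hw2]; ring
  field_simp at A1 A2 A3
  simp only [hw4, hw2] at A1 A2 A3
  have hKpos : 0 < Γ - 1 := by linarith
  have EQRbig : (Γ-1)^7*(1-v^2)^10*(r*(qt+v*qx) - Γ*q*(rt+v*rx)) = 0 := by
    linear_combination (r*(Γ-1)^7*(1-v^2)^8)*A3 - (r*(Γ-1)^7*(1-v^2)^8*v)*A2
      - ((Γ-1)^7*(1-v^2)^9*((Γ-1)*r+Γ*q))*A1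
  have hfac : (Γ-1)^7*(1-v^2)^10 ≠ 0 := (mul_pos (pow_pos hKpos 7) (pow_pos hb 10)).ne'
  have EQR : r*(qt+v*qx) - Γ*q*(rt+v*rx) = 0 :=
    (mul_eq_zero.mp EQRbig).resolve_left hfac
  have hw3 : w^3 = (1-v^2)*w := by rw [← hw2]; ring
  field_simp
  simp only [hw3, hw2]
  linear_combination ((Real.log q - Γ*Real.log r)*q)*A1 + (1-v^2)*EQR
end
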